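/- Suppose S ⊆ ω₁ is unbounded in ω₁ and there is a separable metrizable topological space M with K(M) ≥_T (S, K(S)), i.e. there is a map φ : K(M) → K(S) carrying every cofinal subset of K(M) to a family of compact subsets of S whose union covers S. Then S is not co-stationary, i.e. ω₁ \ S is non-stationary. -/

import Mathlib

open Cardinal Set

universe u v

/-- `C` is cofinal for `P'` in `P`: every element of `P'` lies below some element of `C`. -/
def IsCofinalFor' {P : Type u} [Preorder P] (P' C : Set P) : Prop :=
  ∀ p ∈ P', ∃ c ∈ C, p ≤ c

/-- `φ : P → Q` is a relative Tukey quotient from `(P', P)` to `(Q', Q)`: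
it maps every subset of `P` cofinal for `P'` to a subset of `Q` cofinal for `Q'`. -/
def IsRelTukeyQuotient {P : Type u} {Q : Type v} [Preorder P] [Preorder Q]
    (P' : Set P) (Q' : Set Q) (φ : P → Q) : Prop :=
  ∀ C : Set P, IsCofinalFor' P' C → IsCofinalFor' Q' (φ '' C)

/-- `(P', P) ≥_T (Q', Q)`: there exists a relative Tukey quotient. -/
def RelTukeyGE {P : Type u} {Q : Type v} [Preorder P] [Preorder Q]
    (P' : Set P) (Q' : Set Q) : Prop :=
  ∃ φ : P → Q, IsRelTukeyQuotient P' Q' φ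

/-- `P ≥_T Q`: there is a Tukey quotient from `P` to `Q`. -/
def TukeyGE (P : Type u) (Q : Type v) [Preorder P] [Preorder Q] : Prop :=
  RelTukeyGE (Set.univ : Set P) (Set.univ : Set Q)

/-- `A` is unbounded in `P`: it has no upper bound in `P`. -/
def UnboundedIn {P : Type u} [Preorder P] (A : Set P) : Prop :=
  ¬ ∃ b : P, ∀ a ∈ A, a ≤ b

noncomputable section

/-- `ω₁`: the set of countable ordinals, as the canonical well-order of order type `ω₁`. -/
def O1 : Type := (Cardinal.aleph 1).ord.ToType

noncomputable instance : LinearOrder O1 :=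
  inferInstanceAs (LinearOrder (Cardinal.aleph 1).ord.ToType)

/-- `ω₁` carries its order topology. -/
instance : TopologicalSpace O1 := Preorder.topology O1

instance : OrderTopology O1 := ⟨rfl⟩

/-- `K(S)` for `S ⊆ ω₁`: the compact subsets of `S` (equivalently, compact subsets of `ω₁`
contained in `S`), ordered by inclusion. -/
def KS (S : Set O1) : Type := {K : Set O1 // K ⊆ S ∧ IsCompact K}

instance (S : Set O1) : PartialOrder (KS S) := Subtype.partialOrder _

/-- `A ⊆ ω₁` is bounded in `ω₁`. -/
def BddO1 (A : Set O1) : Prop := ∃ β : O1, ∀ x ∈ A, x ≤ β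

/-- `C ⊆ ω₁` is cub: closed in the order topology and unbounded in `ω₁`. -/
def IsCub (C : Set O1) : Prop := IsClosed C ∧ ¬ BddO1 C

/-- `S ⊆ ω₁` is stationary: it meets every cub set. -/
def IsStat (S : Set O1) : Prop := ∀ C : Set O1, IsCub C → (S ∩ C).Nonempty

/-- `K(M)`: the poset of compact subsets of a space `M`, ordered by inclusion. -/
def KM (M : Type u) [TopologicalSpace M] : Type u := {K : Set M // IsCompact K}

instance (M : Type u) [TopologicalSpace M] : PartialOrder (KM M) := Subtype.partialOrder _

/-!
Given the Tukey map `φ`, every `x ∈ S` is forced by a compact `G x ⊆ M`: `x ∈ φ K` whenever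
`G x ⊆ K`, since otherwise the compacts `K` with `x ∉ φ K` would be cofinal in `K(M)`.
The hyperspace of compact subsets of `M` (Vietoris topology) is second countable, so along the
unbounded set `S` some value `G a` is a cluster point of `G`: for a countable antitone
neighbourhood basis `N n` of `G a`, every `U n = {x ∈ S | G x ∈ N n}` is unbounded.
The closures of the `U n` meet in a cub, so if `ω₁ \ S` were stationary it would contain a point
`δ` of it, the limit of some `x n ∈ U n`. Then `G (x n) → G a`, so `K = G a ∪ ⋃ n, G (x n)` is
compact, and `φ K` is a compact, hence closed, subset of `S` containing every `x n`: `δ ∈ S`.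
-/

open Filter Topology TopologicalSpace

theorem exists_forall_ge_mem_of_cofinal_covers {P α : Type*} [Preorder P] {F : P → Set α}
    {S : Set α} (hF : ∀ C : Set P, (∀ p, ∃ c ∈ C, p ≤ c) → ∀ x ∈ S, ∃ c ∈ C, x ∈ F c)
    {x : α} (hx : x ∈ S) : ∃ p, ∀ q, p ≤ q → x ∈ F q := by
  by_contra! h
  obtain ⟨c, hc, hxc⟩ := hF {q | x ∉ F q} (fun p => (h p).imp fun _ hq => ⟨hq.2, hq.1⟩) x hx
  exact hc hxc

theorem Filter.eventually_mapClusterPt {α X : Type*} [TopologicalSpace X]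
    [SecondCountableTopology X] (l : Filter α) [CountableInterFilter l] (g : α → X) :
    ∀ᶠ a in l, MapClusterPt (g a) l g := by
  have hclust : ∀ t ∈ countableBasis X, ∀ᶠ a in l, g a ∈ t → ∃ᶠ x in l, g x ∈ t := by
    intro t _
    by_cases ht : ∃ᶠ x in l, g x ∈ t
    · exact Eventually.of_forall fun _ _ => ht
    · exact (not_frequently.1 ht).mono fun _ ha h => (ha h).elim
  filter_upwards [(eventually_countable_ball (countable_countableBasis X)).2 hclust] with a ha
  refine mapClusterPt_iff_frequently.2 fun N hN => ?_
  obtain ⟨t, htB, hat, htN⟩ := (isBasis_countableBasis X).mem_nhds_iff.1 hN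
  exact (ha t htB hat).mono fun _ hx => htN hx

theorem exists_seq_tendsto_of_forall_mem_closure {X : Type*} [TopologicalSpace X]
    [FirstCountableTopology X] {U : ℕ → Set X} {x : X} (h : ∀ n, x ∈ closure (U n)) :
    ∃ u : ℕ → X, (∀ n, u n ∈ U n) ∧ Tendsto u atTop (𝓝 x) := by
  obtain ⟨t, ht⟩ := (𝓝 x).exists_antitone_basis
  choose u hu using fun n => mem_closure_iff_nhds.1 (h n) (t n) (ht.mem n)
  exact ⟨u, fun n => (hu n).2, ht.tendsto fun n => (hu n).1⟩

theorem TopologicalSpace.Compacts.isCompact_union_iUnion_of_tendsto {X : Type*}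
    [TopologicalSpace X] {K : ℕ → Compacts X} {K₀ : Compacts X}
    (h : Tendsto K atTop (𝓝 K₀)) : IsCompact ((K₀ : Set X) ∪ ⋃ n, (K n : Set X)) := by
  simpa only [biUnion_insert, biUnion_range] using
    Compacts.isCompact_biUnion_coe_of_isCompact h.isCompact_insert_range

theorem exists_isLUB_of_wellFoundedLT {α : Type*} [LinearOrder α] [WellFoundedLT α] {A : Set α}
    (hA : BddAbove A) : ∃ δ, IsLUB A δ :=
  ⟨wellFounded_lt.min _ hA, wellFounded_lt.min_mem _ hA, fun _ hc => wellFounded_lt.min_le hc⟩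

namespace O1

instance : WellFoundedLT O1 := inferInstanceAs (WellFoundedLT (Cardinal.aleph 1).ord.ToType)

instance : Nonempty O1 := Ordinal.nonempty_toType_iff.2 (ord_pos.2 (aleph_pos 1)).ne'

instance : NoMaxOrder O1 := Cardinal.noMaxOrder (Cardinal.aleph0_le_aleph 1)

instance : SuccOrder O1 := SuccOrder.ofLinearWellFoundedLT O1

theorem countable_Iio (δ : O1) : (Iio δ).Countable := by
  have h := mk_Iio_lt (α := (aleph 1).ord.ToType) δ (by simp)
  rw [mk_ord_toType] at h
  exact le_aleph0_iff_set_countable.1 (lt_aleph_one_iff.1 h)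

theorem countable_Iic (δ : O1) : (Iic δ).Countable := by
  simpa only [Iio_insert] using (countable_Iio δ).insert δ

theorem bddAbove_of_countable {A : Set O1} (hA : A.Countable) : BddAbove A := by
  by_contra h
  have hcof : Order.cof O1 = ℵ₁ :=
    (Ordinal.cof_toType _).trans Cardinal.isRegular_aleph_one.cof_ord
  exact (lt_aleph_one_iff.2 (le_aleph0_iff_set_countable.2 hA)).not_ge
    (hcof ▸ Order.cof_le (IsCofinal.of_not_bddAbove h))

theorem not_bddO1_iff_frequently_atTop {A : Set O1} : ¬BddO1 A ↔ ∃ᶠ x in atTop, x ∈ A := by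
  change ¬BddAbove A ↔ _
  simp only [not_bddAbove_iff, frequently_atTop', gt_iff_lt, and_comm]

instance : CountableInterFilter (atTop : Filter O1) := by
  refine ⟨fun 𝒮 h𝒮 hmem => ?_⟩
  have := h𝒮.to_subtype
  choose b hb using fun s : 𝒮 => mem_atTop_sets.1 (hmem s s.2)
  obtain ⟨β, hβ⟩ := bddAbove_of_countable (countable_range b)
  exact mem_atTop_sets.2 ⟨β, fun x hx s hs => hb ⟨s, hs⟩ x ((hβ ⟨⟨s, hs⟩, rfl⟩).trans hx)⟩

instance : FirstCountableTopology O1 where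
  nhds_generated_countable δ := by
    have hopen : IsOpen (Iic δ) := Order.Iio_succ δ ▸ isOpen_Iio
    have : Countable (Iic δ) := (countable_Iic δ).to_subtype
    rw [← hopen.isOpenEmbedding_subtypeVal.map_nhds_eq ⟨δ, self_mem_Iic⟩]
    infer_instance

theorem isCub_iInter_closure {U : ℕ → Set O1} (hU : ∀ n, ∃ᶠ x in atTop, x ∈ U n) :
    IsCub (⋂ n, closure (U n)) := by
  refine ⟨isClosed_iInter fun n => isClosed_closure, fun ⟨b, hb⟩ => ?_⟩
  choose f hf_gt hf_mem using fun n x => frequently_atTop'.1 (hU n) x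
  -- `a` climbs above `b` and enters `U n` at the cofinally many steps `k` with `k.unpair.1 = n`
  let a : ℕ → O1 := fun k => Nat.rec b (fun k y => f k.unpair.1 y) k
  have ha_mono : StrictMono a := strictMono_nat_of_lt_succ fun k => hf_gt _ _
  obtain ⟨δ, hδ⟩ := exists_isLUB_of_wellFoundedLT (bddAbove_of_countable (countable_range a))
  have htend : Tendsto (fun k => a (k + 1)) atTop (𝓝 δ) :=
    (tendsto_atTop_isLUB ha_mono.monotone hδ).comp (tendsto_add_atTop_nat 1)
  have hδC : δ ∈ ⋂ n, closure (U n) := mem_iInter.2 fun n => by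
    refine mem_closure_of_frequently_of_tendsto (frequently_atTop.2 fun N => ?_) htend
    refine ⟨Nat.pair n N, Nat.right_le_pair n N, ?_⟩
    simpa only [a, Nat.unpair_pair] using hf_mem n (a (Nat.pair n N))
  exact (hb δ hδC).not_gt ((ha_mono Nat.zero_lt_one).trans_le (hδ.1 ⟨1, rfl⟩))

end O1

/-- Suppose `S ⊆ ω₁` is unbounded and there is a separable metrizable `M` with
`K(M) ≥_T (S, K(S))`, i.e. a map `φ : K(M) → K(S)` carrying every cofinal subset of `K(M)`
to a family of compact subsets of `S` whose union covers `S`.  Then `S` is not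
co-stationary: `ω₁ \ S` is non-stationary. -/
theorem statement18 (S : Set O1) (hub : ¬ BddO1 S)
    (M : Type u) [TopologicalSpace M]
    [TopologicalSpace.MetrizableSpace M] [TopologicalSpace.SeparableSpace M]
    (h : ∃ φ : KM M → KS S, ∀ C : Set (KM M),
      (∀ K : KM M, ∃ c ∈ C, K ≤ c) → ∀ x ∈ S, ∃ c ∈ C, x ∈ (φ c).1) :
    ¬ IsStat (Set.univ \ S) := by
  intro hstat
  obtain ⟨φ, hφ⟩ := h
  have : SecondCountableTopology M := by
    let := metrizableSpaceMetric M
    infer_instance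
  have hforce : ∀ x ∈ S, ∃ G : Compacts M, ∀ K : KM M, (G : Set M) ⊆ K.1 → x ∈ (φ K).1 := by
    intro x hx
    obtain ⟨K, hK⟩ := exists_forall_ge_mem_of_cofinal_covers (F := fun K => (φ K).1) hφ hx
    exact ⟨⟨K.1, K.2⟩, hK⟩
  choose! G hG using hforce
  have : (atTop ⊓ 𝓟 S).NeBot := frequently_iff_neBot.1 (O1.not_bddO1_iff_frequently_atTop.1 hub)
  obtain ⟨a, ha⟩ := ((atTop ⊓ 𝓟 S).eventually_mapClusterPt G).exists
  obtain ⟨N, hN⟩ := (𝓝 (G a)).exists_antitone_basis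
  let U : ℕ → Set O1 := fun n => {x | x ∈ S ∧ G x ∈ N n}
  have hU : ∀ n, ∃ᶠ x in atTop, x ∈ U n := fun n =>
    frequently_inf_principal.1 (mapClusterPt_iff_frequently.1 ha _ (hN.mem n))
  obtain ⟨δ, ⟨-, hδS⟩, hδ⟩ := hstat _ (O1.isCub_iInter_closure hU)
  obtain ⟨x, hxU, hx⟩ := exists_seq_tendsto_of_forall_mem_closure (mem_iInter.1 hδ)
  let K : KM M := ⟨_, Compacts.isCompact_union_iUnion_of_tendsto (hN.tendsto fun n => (hxU n).2)⟩
  have hxK : ∀ n, x n ∈ (φ K).1 := fun n =>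
    hG _ (hxU n).1 K ((subset_iUnion (fun n => (G (x n) : Set M)) n).trans subset_union_right)
  exact hδS ((φ K).2.1 ((φ K).2.2.isClosed.mem_of_tendsto hx (Eventually.of_forall hxK)))
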